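/- Let m ≥ 3 be an integer and define, for c > 0, λ > 0, t > 0, μ(c, λ, t) = (8c⁴ / (m²(m+2)λ⁴)) · { m·[ e^{−λt}(λ²t² + 3λt + 3) + λ²t²/2 − 3 ] + (λ²t² + 12)(1 − e^{−λt}) − 6λt(1 + e^{−λt}) }. Fix ρ > 0 and t > 0. Then for any sequences (c_n) and (λ_n) of positive reals with λ_n → ∞ and c_n²/λ_n → ρ as n → ∞, one has μ(c_n, λ_n, t) → (2ρt/m)² = 4ρ²t²/m² as n → ∞. -/
import Mathlib


/-- The explicit formula for the 2-marginal second moment function `μ_{(2,2,0,…,0)}(t)` of the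
`m`-dimensional symmetric Markov random flight with speed `c` and switching intensity `λ`. -/
noncomputable def momentFormula (m : ℕ) (c lam t : ℝ) : ℝ :=
  8 * c ^ 4 / ((m : ℝ) ^ 2 * ((m : ℝ) + 2) * lam ^ 4) *
    ((m : ℝ) * (Real.exp (-(lam * t)) * (lam ^ 2 * t ^ 2 + 3 * lam * t + 3)
        + lam ^ 2 * t ^ 2 / 2 - 3)
      + (lam ^ 2 * t ^ 2 + 12) * (1 - Real.exp (-(lam * t)))
      - 6 * lam * t * (1 + Real.exp (-(lam * t))))

/-- Kac scaling: if `λ_n → ∞` and `c_n²/λ_n → ρ > 0`, then for each fixed `t > 0` the 2-marginal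
second moment function `μ(c_n, λ_n, t)` converges to `(2ρt/m)² = 4ρ²t²/m²`, the product of the
variances of two coordinates of the `m`-dimensional homogeneous Brownian motion. -/
theorem kac_scaling_limit (m : ℕ) (hm : 3 ≤ m) (ρ t : ℝ) (hρ : 0 < ρ) (ht : 0 < t)
    (c lam : ℕ → ℝ) (hc : ∀ n, 0 < c n) (hlam : ∀ n, 0 < lam n)
    (hlam_top : Filter.Tendsto lam Filter.atTop Filter.atTop)
    (hratio : Filter.Tendsto (fun n => (c n) ^ 2 / lam n) Filter.atTop (nhds ρ)) :
    Filter.Tendsto (fun n => momentFormula m (c n) (lam n) t) Filter.atTop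
      (nhds (4 * ρ ^ 2 * t ^ 2 / (m : ℝ) ^ 2)) := by
  have hm0 : (0:ℝ) < (m:ℝ) := by
    have : (3:ℝ) ≤ (m:ℝ) := by exact_mod_cast hm
    linarith
  have hm2 : ((m:ℝ) + 2) ≠ 0 := by linarith
  have hmne : ((m:ℝ)) ≠ 0 := ne_of_gt hm0
  -- auxiliary continuous function of (c²/λ, 1/λ, exp(-λt))
  set F : ℝ × ℝ × ℝ → ℝ := fun p =>
    8 / ((m:ℝ)^2 * ((m:ℝ)+2)) * p.1^2 *
      (( ((m:ℝ)-1)*t^2 + (3*(m:ℝ)-6)*t*p.2.1 + (3*(m:ℝ)-12)*p.2.1^2) * p.2.2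
        + ((m:ℝ)+2)*t^2/2 + (12 - 3*(m:ℝ))*p.2.1^2 - 6*t*p.2.1) with hF_def
  have hF : Continuous F := by fun_prop
  have hinv : Filter.Tendsto (fun n => (lam n)⁻¹) Filter.atTop (nhds 0) :=
    hlam_top.inv_tendsto_atTop
  have hE : Filter.Tendsto (fun n => Real.exp (-(lam n * t))) Filter.atTop (nhds 0) := by
    have h1 : Filter.Tendsto (fun n => lam n * t) Filter.atTop Filter.atTop :=
      hlam_top.atTop_mul_const ht
    have h2 : Filter.Tendsto (fun n => -(lam n * t)) Filter.atTop Filter.atBot :=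
      Filter.tendsto_neg_atBot_iff.mpr h1
    exact Real.tendsto_exp_atBot.comp h2
  have hprod : Filter.Tendsto
      (fun n => (((c n)^2 / lam n, ((lam n)⁻¹, Real.exp (-(lam n * t))) ) : ℝ × ℝ × ℝ))
      Filter.atTop (nhds (ρ, (0, 0))) :=
    hratio.prodMk_nhds (hinv.prodMk_nhds hE)
  have hcomp : Filter.Tendsto
      (fun n => F ((c n)^2 / lam n, ((lam n)⁻¹, Real.exp (-(lam n * t)))))
      Filter.atTop (nhds (F (ρ, (0, 0)))) :=
    (hF.tendsto _).comp hprod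
  have hval : F (ρ, (0, 0)) = 4 * ρ ^ 2 * t ^ 2 / (m : ℝ) ^ 2 := by
    simp only [hF_def]
    field_simp
    ring
  rw [hval] at hcomp
  refine hcomp.congr fun n => ?_
  have hl : lam n ≠ 0 := ne_of_gt (hlam n)
  simp only [hF_def, momentFormula]
  field_simp
  ring
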